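/- If U and V are equivalent after extension via invertible operators E : Y ⊕ Y₀ → X ⊕ X₀ and F : X ⊕ X₀ → Y ⊕ Y₀ with U ⊕ I = E (V ⊕ I) F, then, writing E, F, E⁻¹, F⁻¹ as 2×2 block operator matrices, the operator Û = [[U, -E₁₁],[F₁₁, F₁₂E₂₁]] on X ⊕ Y is invertible with inverse [[F₁₂⁽⁻¹⁾E₂₁⁽⁻¹⁾, F₁₁⁽⁻¹⁾],[-E₁₁⁽⁻¹⁾, V]]; in particular U and V are matricially coupled. -/
import Mathlib


open ContinuousLinearMap

/-- 2×2 block operator matrix `[[A, B],[C, D]] : X ⊕ Y → X' ⊕ Y'`. -/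
noncomputable def blk {X Y X' Y' : Type*} [NormedAddCommGroup X] [NormedSpace ℝ X]
    [NormedAddCommGroup Y] [NormedSpace ℝ Y] [NormedAddCommGroup X'] [NormedSpace ℝ X']
    [NormedAddCommGroup Y'] [NormedSpace ℝ Y']
    (A : X →L[ℝ] X') (B : Y →L[ℝ] X') (C : X →L[ℝ] Y') (D : Y →L[ℝ] Y') :
    (X × Y) →L[ℝ] (X' × Y') :=
  (A.coprod B).prod (C.coprod D)

section blocks
variable {X Y X' Y' : Type*} [NormedAddCommGroup X] [NormedSpace ℝ X]
    [NormedAddCommGroup Y] [NormedSpace ℝ Y] [NormedAddCommGroup X'] [NormedSpace ℝ X']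
    [NormedAddCommGroup Y'] [NormedSpace ℝ Y']

/-- (1,1)-entry of a block operator. -/
noncomputable def b11 (T : (X × Y) →L[ℝ] (X' × Y')) : X →L[ℝ] X' :=
  (ContinuousLinearMap.fst ℝ X' Y').comp (T.comp (ContinuousLinearMap.inl ℝ X Y))

/-- (1,2)-entry of a block operator. -/
noncomputable def b12 (T : (X × Y) →L[ℝ] (X' × Y')) : Y →L[ℝ] X' :=
  (ContinuousLinearMap.fst ℝ X' Y').comp (T.comp (ContinuousLinearMap.inr ℝ X Y))

/-- (2,1)-entry of a block operator. -/
noncomputable def b21 (T : (X × Y) →L[ℝ] (X' × Y')) : X →L[ℝ] Y' :=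
  (ContinuousLinearMap.snd ℝ X' Y').comp (T.comp (ContinuousLinearMap.inl ℝ X Y))

/-- (2,2)-entry of a block operator. -/
noncomputable def b22 (T : (X × Y) →L[ℝ] (X' × Y')) : Y →L[ℝ] Y' :=
  (ContinuousLinearMap.snd ℝ X' Y').comp (T.comp (ContinuousLinearMap.inr ℝ X Y))

end blocks


section myblocks
variable {X Y X' Y' X'' Y'' : Type*} [NormedAddCommGroup X] [NormedSpace ℝ X]
    [NormedAddCommGroup Y] [NormedSpace ℝ Y] [NormedAddCommGroup X'] [NormedSpace ℝ X']
    [NormedAddCommGroup Y'] [NormedSpace ℝ Y']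
    [NormedAddCommGroup X''] [NormedSpace ℝ X''] [NormedAddCommGroup Y''] [NormedSpace ℝ Y'']

@[simp] lemma blk_apply (A : X →L[ℝ] X') (B : Y →L[ℝ] X') (C : X →L[ℝ] Y') (D : Y →L[ℝ] Y')
    (x : X) (y : Y) : blk A B C D (x, y) = (A x + B y, C x + D y) := rfl

@[simp] lemma b11_blk (A : X →L[ℝ] X') (B : Y →L[ℝ] X') (C : X →L[ℝ] Y') (D : Y →L[ℝ] Y') :
    b11 (blk A B C D) = A := by ext x; simp [b11]
@[simp] lemma b12_blk (A : X →L[ℝ] X') (B : Y →L[ℝ] X') (C : X →L[ℝ] Y') (D : Y →L[ℝ] Y') :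
    b12 (blk A B C D) = B := by ext x; simp [b12]
@[simp] lemma b21_blk (A : X →L[ℝ] X') (B : Y →L[ℝ] X') (C : X →L[ℝ] Y') (D : Y →L[ℝ] Y') :
    b21 (blk A B C D) = C := by ext x; simp [b21]
@[simp] lemma b22_blk (A : X →L[ℝ] X') (B : Y →L[ℝ] X') (C : X →L[ℝ] Y') (D : Y →L[ℝ] Y') :
    b22 (blk A B C D) = D := by ext x; simp [b22]

@[simp] lemma b11_apply (T : (X × Y) →L[ℝ] (X' × Y')) (x : X) : b11 T x = (T (x, 0)).1 := rfl
@[simp] lemma b12_apply (T : (X × Y) →L[ℝ] (X' × Y')) (y : Y) : b12 T y = (T (0, y)).1 := rfl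
@[simp] lemma b21_apply (T : (X × Y) →L[ℝ] (X' × Y')) (x : X) : b21 T x = (T (x, 0)).2 := rfl
@[simp] lemma b22_apply (T : (X × Y) →L[ℝ] (X' × Y')) (y : Y) : b22 T y = (T (0, y)).2 := rfl

lemma pair_decomp (T : (X × Y) →L[ℝ] (X' × Y')) (x : X) (y : Y) :
    T (x, y) = T (x, 0) + T (0, y) := by
  rw [← map_add]; norm_num

lemma b11_comp (S : (X' × Y') →L[ℝ] (X'' × Y'')) (T : (X × Y) →L[ℝ] (X' × Y')) :
    b11 (S.comp T) = (b11 S).comp (b11 T) + (b12 S).comp (b21 T) := by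
  ext x
  have h : T (x, 0) = ((T (x, 0)).1, 0) + (0, (T (x, 0)).2) := by simp
  simp only [b11, b12, b21, add_apply, comp_apply, inl_apply, inr_apply, coe_fst', coe_snd']
  rw [h, map_add]; simp

lemma b12_comp (S : (X' × Y') →L[ℝ] (X'' × Y'')) (T : (X × Y) →L[ℝ] (X' × Y')) :
    b12 (S.comp T) = (b11 S).comp (b12 T) + (b12 S).comp (b22 T) := by
  ext y
  have h : T (0, y) = ((T (0, y)).1, 0) + (0, (T (0, y)).2) := by simp
  simp only [b11, b12, b22, add_apply, comp_apply, inl_apply, inr_apply, coe_fst', coe_snd']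
  rw [h, map_add]; simp

lemma b21_comp (S : (X' × Y') →L[ℝ] (X'' × Y'')) (T : (X × Y) →L[ℝ] (X' × Y')) :
    b21 (S.comp T) = (b21 S).comp (b11 T) + (b22 S).comp (b21 T) := by
  ext x
  have h : T (x, 0) = ((T (x, 0)).1, 0) + (0, (T (x, 0)).2) := by simp
  simp only [b11, b21, b22, add_apply, comp_apply, inl_apply, inr_apply, coe_fst', coe_snd']
  rw [h, map_add]; simp

lemma b22_comp (S : (X' × Y') →L[ℝ] (X'' × Y'')) (T : (X × Y) →L[ℝ] (X' × Y')) :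
    b22 (S.comp T) = (b21 S).comp (b12 T) + (b22 S).comp (b22 T) := by
  ext y
  have h : T (0, y) = ((T (0, y)).1, 0) + (0, (T (0, y)).2) := by simp
  simp only [b12, b21, b22, add_apply, comp_apply, inl_apply, inr_apply, coe_fst', coe_snd']
  rw [h, map_add]; simp

@[simp] lemma b11_id : b11 (ContinuousLinearMap.id ℝ (X × Y)) = ContinuousLinearMap.id ℝ X := by
  ext x; simp
@[simp] lemma b12_id : b12 (ContinuousLinearMap.id ℝ (X × Y)) = 0 := by ext y; simp
@[simp] lemma b21_id : b21 (ContinuousLinearMap.id ℝ (X × Y)) = 0 := by ext x; simp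
@[simp] lemma b22_id : b22 (ContinuousLinearMap.id ℝ (X × Y)) = ContinuousLinearMap.id ℝ Y := by
  ext y; simp

lemma blk_eta (T : (X × Y) →L[ℝ] (X' × Y')) : blk (b11 T) (b12 T) (b21 T) (b22 T) = T := by
  apply ContinuousLinearMap.ext
  rintro ⟨x, y⟩
  rw [pair_decomp T x y]
  simp [Prod.ext_iff]

lemma blk_ext {A A' : X →L[ℝ] X'} {B B' : Y →L[ℝ] X'} {C C' : X →L[ℝ] Y'} {D D' : Y →L[ℝ] Y'}
    (hA : A = A') (hB : B = B') (hC : C = C') (hD : D = D') :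
    blk A B C D = blk A' B' C' D' := by rw [hA, hB, hC, hD]

end myblocks

/-- Equivalence after extension implies matricial coupling, with explicit formulas. -/
theorem stmt1 {X Y X₀ Y₀ : Type*} [NormedAddCommGroup X] [NormedSpace ℝ X] [CompleteSpace X]
    [NormedAddCommGroup Y] [NormedSpace ℝ Y] [CompleteSpace Y]
    [NormedAddCommGroup X₀] [NormedSpace ℝ X₀] [CompleteSpace X₀]
    [NormedAddCommGroup Y₀] [NormedSpace ℝ Y₀] [CompleteSpace Y₀]
    (U : X →L[ℝ] X) (V : Y →L[ℝ] Y)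
    (E : (Y × Y₀) →L[ℝ] (X × X₀)) (Einv : (X × X₀) →L[ℝ] (Y × Y₀))
    (F : (X × X₀) →L[ℝ] (Y × Y₀)) (Finv : (Y × Y₀) →L[ℝ] (X × X₀))
    (hE1 : E.comp Einv = ContinuousLinearMap.id ℝ (X × X₀))
    (hE2 : Einv.comp E = ContinuousLinearMap.id ℝ (Y × Y₀))
    (hF1 : F.comp Finv = ContinuousLinearMap.id ℝ (Y × Y₀))
    (hF2 : Finv.comp F = ContinuousLinearMap.id ℝ (X × X₀))
    (hEq : blk U 0 0 (ContinuousLinearMap.id ℝ X₀) =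
      E.comp ((blk V 0 0 (ContinuousLinearMap.id ℝ Y₀)).comp F))
    (Uh : (X × Y) →L[ℝ] (X × Y))
    (hUh : Uh = blk U (-(b11 E)) (b11 F) ((b12 F).comp (b21 E)))
    (Uhinv : (X × Y) →L[ℝ] (X × Y))
    (hUhinv : Uhinv = blk ((b12 Finv).comp (b21 Einv)) (b11 Finv) (-(b11 Einv)) V) :
    Uh.comp Uhinv = ContinuousLinearMap.id ℝ (X × Y) ∧
    Uhinv.comp Uh = ContinuousLinearMap.id ℝ (X × Y) := by
  set e11 := b11 E; set e12 := b12 E; set e21 := b21 E; set e22 := b22 E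
  set f11 := b11 F; set f12 := b12 F; set f21 := b21 F; set f22 := b22 F
  set a11 := b11 Einv; set a12 := b12 Einv; set a21 := b21 Einv; set a22 := b22 Einv
  set g11 := b11 Finv; set g12 := b12 Finv; set g21 := b21 Finv; set g22 := b22 Finv
  have hR : (blk U 0 0 (ContinuousLinearMap.id ℝ X₀)).comp Finv
      = E.comp (blk V 0 0 (ContinuousLinearMap.id ℝ Y₀)) := by
    rw [hEq, comp_assoc, comp_assoc, hF1, comp_id]
  have hS : Einv.comp (blk U 0 0 (ContinuousLinearMap.id ℝ X₀))
      = (blk V 0 0 (ContinuousLinearMap.id ℝ Y₀)).comp F := by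
    rw [hEq, ← comp_assoc, ← comp_assoc, hE2, id_comp]
  have R1 : U.comp g11 = e11.comp V := by
    have := congrArg b11 hR; simpa [b11_comp] using this
  have R2 : U.comp g12 = e12 := by
    have := congrArg b12 hR; simpa [b12_comp] using this
  have R3 : g21 = e21.comp V := by
    have := congrArg b21 hR; simpa [b21_comp] using this
  have R4 : g22 = e22 := by
    have := congrArg b22 hR; simpa [b22_comp] using this
  have S1 : a11.comp U = V.comp f11 := by
    have := congrArg b11 hS; simpa [b11_comp] using this
  have S2 : a12 = V.comp f12 := by
    have := congrArg b12 hS; simpa [b12_comp] using this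
  have S3 : a21.comp U = f21 := by
    have := congrArg b21 hS; simpa [b21_comp] using this
  have S4 : a22 = f22 := by
    have := congrArg b22 hS; simpa [b22_comp] using this
  have EE11 : e11.comp a11 + e12.comp a21 = ContinuousLinearMap.id ℝ X := by
    have := congrArg b11 hE1; simpa [b11_comp] using this
  have EE21 : e21.comp a11 + e22.comp a21 = 0 := by
    have := congrArg b21 hE1; simpa [b21_comp] using this
  have EiE11 : a11.comp e11 + a12.comp e21 = ContinuousLinearMap.id ℝ Y := by
    have := congrArg b11 hE2; simpa [b11_comp] using this
  have EiE21 : a21.comp e11 + a22.comp e21 = 0 := by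
    have := congrArg b21 hE2; simpa [b21_comp] using this
  have FF11 : f11.comp g11 + f12.comp g21 = ContinuousLinearMap.id ℝ Y := by
    have := congrArg b11 hF1; simpa [b11_comp] using this
  have FF12 : f11.comp g12 + f12.comp g22 = 0 := by
    have := congrArg b12 hF1; simpa [b12_comp] using this
  have FiF11 : g11.comp f11 + g12.comp f21 = ContinuousLinearMap.id ℝ X := by
    have := congrArg b11 hF2; simpa [b11_comp] using this
  have FiF12 : g11.comp f12 + g12.comp f22 = 0 := by
    have := congrArg b12 hF2; simpa [b12_comp] using this
  have idblk : ContinuousLinearMap.id ℝ (X × Y) = blk (ContinuousLinearMap.id ℝ X) 0 0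
      (ContinuousLinearMap.id ℝ Y) := by
    rw [← blk_eta (ContinuousLinearMap.id ℝ (X × Y))]; simp
  constructor
  · rw [hUh, hUhinv, ← blk_eta ((blk U (-e11) f11 (f12.comp e21)).comp
      (blk ((g12.comp a21)) g11 (-a11) V)), idblk]
    refine blk_ext ?_ ?_ ?_ ?_
    · rw [b11_comp]; simp only [b11_blk, b12_blk, b21_blk]
      rw [← comp_assoc, R2, neg_comp, comp_neg, neg_neg, add_comm]
      exact EE11
    · rw [b12_comp]; simp only [b11_blk, b12_blk, b22_blk]
      rw [R1, neg_comp, add_neg_cancel]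
    · rw [b21_comp]; simp only [b11_blk, b21_blk, b22_blk]
      have h1 : f11.comp g12 = -(f12.comp g22) := by
        rw [eq_neg_iff_add_eq_zero]; exact FF12
      calc f11.comp (g12.comp a21) + (f12.comp e21).comp (-a11)
          = -(f12.comp (e22.comp a21)) + -(f12.comp (e21.comp a11)) := by
            rw [← comp_assoc, h1, R4, neg_comp, comp_assoc, comp_neg, comp_assoc]
        _ = -(f12.comp (e21.comp a11 + e22.comp a21)) := by
            rw [comp_add, neg_add, add_comm]
        _ = 0 := by rw [EE21, comp_zero, neg_zero]
    · rw [b22_comp]; simp only [b12_blk, b21_blk, b22_blk]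
      rw [comp_assoc, ← R3]
      exact FF11
  · rw [hUh, hUhinv, ← blk_eta ((blk ((g12.comp a21)) g11 (-a11) V).comp
      (blk U (-e11) f11 (f12.comp e21))), idblk]
    refine blk_ext ?_ ?_ ?_ ?_
    · rw [b11_comp]; simp only [b11_blk, b12_blk, b21_blk]
      rw [comp_assoc, S3, add_comm]
      exact FiF11
    · rw [b12_comp]; simp only [b11_blk, b12_blk, b22_blk]
      have h1 : g11.comp f12 = -(g12.comp f22) := by
        rw [eq_neg_iff_add_eq_zero]; exact FiF12
      calc (g12.comp a21).comp (-e11) + g11.comp (f12.comp e21)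
          = -(g12.comp (a21.comp e11)) + -(g12.comp (a22.comp e21)) := by
            rw [comp_neg, comp_assoc, ← comp_assoc g11 f12 e21, h1, neg_comp,
              comp_assoc, ← S4]
        _ = -(g12.comp (a21.comp e11 + a22.comp e21)) := by rw [comp_add, neg_add]
        _ = 0 := by rw [EiE21, comp_zero, neg_zero]
    · rw [b21_comp]; simp only [b11_blk, b21_blk, b22_blk]
      rw [neg_comp, S1, neg_add_cancel]
    · rw [b22_comp]; simp only [b12_blk, b21_blk, b22_blk]
      rw [neg_comp, comp_neg, neg_neg, ← comp_assoc, ← S2]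
      exact EiE11
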